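/- Define pFDR̄(F; γ) = π(F)·γ/F(γ) for γ ∈ (0,1) with F(γ) > 0. If F_n → F weakly in F, F is continuous at γ, and F(γ) > 0, then limsup_{n→∞} pFDR̄(F_n; γ) ≤ pFDR̄(F; γ). -/
import Mathlib


open Set Filter

/-- A cumulative distribution function of a probability measure on [0,1]. -/
def IsCDF01 (H : ℝ → ℝ) : Prop :=
  Monotone H ∧ (∀ x, x < 0 → H x = 0) ∧ (∀ x, 1 ≤ x → H x = 1) ∧
    ∀ x, ContinuousWithinAt H (Ici x) x

/-- CDF of the uniform distribution on [0,1]. -/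
noncomputable def unifCDF (x : ℝ) : ℝ := max 0 (min x 1)

/-- The mixture `π · Uniform + (1-π) · H`. -/
noncomputable def mix (p : ℝ) (H : ℝ → ℝ) (x : ℝ) : ℝ :=
  p * unifCDF x + (1 - p) * H x

/-- Weak convergence of CDFs: pointwise convergence at continuity points of the limit. -/
def WeakConv (Fn : ℕ → ℝ → ℝ) (F : ℝ → ℝ) : Prop :=
  ∀ x, ContinuousAt F x → Tendsto (fun n => Fn n x) atTop (nhds (F x))

/-- `π(F) = inf { (1 - F(λ))/(1-λ) : 0 < λ < 1 }`. -/
noncomputable def piF (F : ℝ → ℝ) : ℝ :=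
  ⨅ l : Ioo (0:ℝ) 1, (1 - F l) / (1 - l)

/-- `pFDR̄(F; γ) = π(F)·γ / F(γ)`. -/
noncomputable def pFDRbar (F : ℝ → ℝ) (γ : ℝ) : ℝ := piF F * γ / F γ

lemma cdf01_nonneg {H : ℝ → ℝ} (hH : IsCDF01 H) (x : ℝ) : 0 ≤ H x := by
  have h0 : H (min x 0 - 1) = 0 := hH.2.1 _ (by have := min_le_right x 0; linarith)
  have : H (min x 0 - 1) ≤ H x := hH.1 (by have := min_le_left x 0; linarith)
  linarith

lemma cdf01_le_one {H : ℝ → ℝ} (hH : IsCDF01 H) (x : ℝ) : H x ≤ 1 := by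
  have h1 : H (max x 1) = 1 := hH.2.2.1 _ (le_max_right x 1)
  have : H x ≤ H (max x 1) := hH.1 (le_max_left x 1)
  linarith

lemma unifCDF_nonneg (x : ℝ) : 0 ≤ unifCDF x := le_max_left _ _

lemma unifCDF_le_one (x : ℝ) : unifCDF x ≤ 1 :=
  max_le zero_le_one (min_le_right _ _)

lemma unifCDF_mono : Monotone unifCDF := fun a b hab =>
  max_le_max le_rfl (min_le_min hab le_rfl)

lemma mix_nonneg {p : ℝ} {H : ℝ → ℝ} (hp : p ∈ Icc (0:ℝ) 1) (hH : IsCDF01 H) (x : ℝ) :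
    0 ≤ mix p H x := by
  have := unifCDF_nonneg x
  have := cdf01_nonneg hH x
  have h1 := hp.1; have h2 := hp.2
  have : (0:ℝ) ≤ (1 - p) * H x := mul_nonneg (by linarith) (by linarith)
  have : (0:ℝ) ≤ p * unifCDF x := mul_nonneg (by linarith) (by linarith)
  unfold mix; linarith

lemma mix_le_one {p : ℝ} {H : ℝ → ℝ} (hp : p ∈ Icc (0:ℝ) 1) (hH : IsCDF01 H) (x : ℝ) :
    mix p H x ≤ 1 := by
  have h1 := hp.1; have h2 := hp.2
  have hu := unifCDF_le_one x
  have hh := cdf01_le_one hH x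
  have : p * unifCDF x ≤ p * 1 := mul_le_mul_of_nonneg_left hu h1
  have : (1 - p) * H x ≤ (1 - p) * 1 := mul_le_mul_of_nonneg_left hh (by linarith)
  unfold mix; nlinarith

lemma mix_mono {p : ℝ} {H : ℝ → ℝ} (hp : p ∈ Icc (0:ℝ) 1) (hH : IsCDF01 H) :
    Monotone (mix p H) := by
  intro a b hab
  unfold mix
  have h1 := hp.1; have h2 := hp.2
  have hu : p * unifCDF a ≤ p * unifCDF b :=
    mul_le_mul_of_nonneg_left (unifCDF_mono hab) h1
  have hh : (1 - p) * H a ≤ (1 - p) * H b :=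
    mul_le_mul_of_nonneg_left (hH.1 hab) (by linarith)
  linarith

lemma piF_bddBelow {p : ℝ} {H : ℝ → ℝ} (hp : p ∈ Icc (0:ℝ) 1) (hH : IsCDF01 H) :
    BddBelow (Set.range fun l : Ioo (0:ℝ) 1 => (1 - mix p H l) / (1 - l)) := by
  refine ⟨0, ?_⟩
  rintro _ ⟨l, rfl⟩
  exact div_nonneg (by have := mix_le_one hp hH l; linarith) (by have := l.2.2; linarith)

lemma piF_mix_nonneg {p : ℝ} {H : ℝ → ℝ} (hp : p ∈ Icc (0:ℝ) 1) (hH : IsCDF01 H) :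
    0 ≤ piF (mix p H) := by
  apply Real.iInf_nonneg
  intro l
  exact div_nonneg (by have := mix_le_one hp hH l; linarith) (by have := l.2.2; linarith)

/-- upper semicontinuity of `pFDR̄(·; γ)` under weak convergence
within the mixture class, at a continuity point `γ` of the limit with `F(γ) > 0`. -/
theorem pFDRbar_upper_semicontinuous
    (pn : ℕ → ℝ) (Hn : ℕ → ℝ → ℝ) (p : ℝ) (H : ℝ → ℝ) (γ : ℝ)
    (hpn : ∀ n, pn n ∈ Icc (0:ℝ) 1) (hHn : ∀ n, IsCDF01 (Hn n))
    (hp : p ∈ Icc (0:ℝ) 1) (hH : IsCDF01 H)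
    (hγ : γ ∈ Ioo (0:ℝ) 1)
    (hcont : ContinuousAt (mix p H) γ)
    (hpos : 0 < mix p H γ)
    (hconv : WeakConv (fun n => mix (pn n) (Hn n)) (mix p H)) :
    Filter.limsup (fun n => pFDRbar (mix (pn n) (Hn n)) γ) atTop ≤
      pFDRbar (mix p H) γ := by
  set F : ℝ → ℝ := mix p H with hF
  -- Key: for every `c > piF F`, eventually `piF (Fn n) < c`.
  have key : ∀ c : ℝ, piF F < c →
      ∀ᶠ n in atTop, piF (mix (pn n) (Hn n)) < c := by
    intro c hc
    haveI : Nonempty (Ioo (0:ℝ) 1) := ⟨⟨1/2, by norm_num⟩⟩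
    obtain ⟨l, hl⟩ := exists_lt_of_ciInf_lt hc
    have hl0 : (0:ℝ) < l := l.2.1
    have hl1 : (l:ℝ) < 1 := l.2.2
    -- `φ t = (1 - F l)/(1 - t)` is continuous at `l` with value `< c`.
    have hφcont : ContinuousAt (fun t : ℝ => (1 - F l) / (1 - t)) (l : ℝ) := by
      apply ContinuousAt.div continuousAt_const
      · exact (continuous_const.sub continuous_id).continuousAt
      · intro h; nlinarith [sub_eq_zero.1 h]
    have hev : ∀ᶠ t in nhds (l : ℝ), (1 - F l) / (1 - t) < c :=
      hφcont.eventually_lt_const hl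
    obtain ⟨r, hr, hball⟩ := Metric.eventually_nhds_iff.1 hev
    -- choose a continuity point `l'` of `F` in `(l, min (l+r) 1)`.
    have hdense : Dense {x : ℝ | ¬ ContinuousAt F x}ᶜ :=
      ((mix_mono hp hH).countable_not_continuousAt).dense_compl ℝ
    have hUne : Set.Nonempty (Ioo (l : ℝ) (min ((l : ℝ) + r) 1)) := by
      refine nonempty_Ioo.2 ?_
      exact lt_min (by linarith) hl1
    obtain ⟨l', hl'c, hl'U⟩ := hdense.exists_mem_open isOpen_Ioo hUne
    have hcl' : ContinuousAt F l' := not_not.1 hl'c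
    have hl'0 : (0:ℝ) < l' := lt_trans hl0 hl'U.1
    have hl'1 : l' < 1 := lt_of_lt_of_le hl'U.2 (min_le_right _ _)
    have hl'd : (1:ℝ) - l' > 0 := by linarith
    -- bound the inf term at `l'` for the limit `F`.
    have hFl'lt : (1 - F l') / (1 - l') < c := by
      have hmono : F (l : ℝ) ≤ F l' := mix_mono hp hH (le_of_lt hl'U.1)
      have h1 : (1 - F l') / (1 - l') ≤ (1 - F (l : ℝ)) / (1 - l') :=
        (div_le_div_iff_of_pos_right hl'd).2 (by linarith)
      have h2 : (1 - F (l : ℝ)) / (1 - l') < c := by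
        apply hball
        have : l' < (l : ℝ) + r := lt_of_lt_of_le hl'U.2 (min_le_left _ _)
        rw [Real.dist_eq, abs_lt]
        constructor <;> [linarith [hl'U.1]; linarith [hl'U.1]]
      linarith
    -- convergence at `l'` transfers the bound to `Fn`.
    have hn : Tendsto (fun n => (1 - mix (pn n) (Hn n) l') / (1 - l')) atTop
        (nhds ((1 - F l') / (1 - l'))) :=
      (tendsto_const_nhds.sub (hconv l' hcl')).div_const _
    filter_upwards [hn.eventually_lt_const hFl'lt] with n hn2
    calc piF (mix (pn n) (Hn n))
        ≤ (1 - mix (pn n) (Hn n) l') / (1 - l') :=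
          ciInf_le (piF_bddBelow (hpn n) (hHn n)) ⟨l', hl'0, hl'1⟩
      _ < c := hn2
  -- convergence of denominators
  have hFγ : Tendsto (fun n => mix (pn n) (Hn n) γ) atTop (nhds (F γ)) :=
    hconv γ hcont
  set A : ℝ := piF F with hA
  set L : ℝ := F γ with hL
  have hA0 : 0 ≤ A := piF_mix_nonneg hp hH
  have hL0 : 0 < L := hpos
  have hγ0 : 0 < γ := hγ.1
  -- lower bound for coboundedness of the limsup
  have hcb : IsCoboundedUnder (· ≤ ·) atTop
      (fun n => pFDRbar (mix (pn n) (Hn n)) γ) :=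
    Filter.IsBoundedUnder.isCoboundedUnder_le
      (Filter.isBoundedUnder_of ⟨0, fun n =>
        div_nonneg (mul_nonneg (piF_mix_nonneg (hpn n) (hHn n)) hγ.1.le)
          (mix_nonneg (hpn n) (hHn n) γ)⟩)
  -- it suffices to bound the limsup by `T + ε` for every `ε > 0`.
  apply le_of_forall_pos_le_add
  intro ε hε
  apply Filter.limsup_le_of_le hcb
  -- choose `δ` via continuity of `d ↦ (A + d) * γ / (L - d)` at `0`.
  have hhcont : ContinuousAt (fun d : ℝ => (A + d) * γ / (L - d)) 0 := by
    apply ContinuousAt.div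
    · exact ((continuous_const.add continuous_id).mul continuous_const).continuousAt
    · exact (continuous_const.sub continuous_id).continuousAt
    · simp only [id_eq, sub_zero]; exact ne_of_gt hL0
  have hval : (A + 0) * γ / (L - 0) < pFDRbar F γ + ε := by
    simp only [add_zero, sub_zero]
    have : pFDRbar F γ = A * γ / L := rfl
    rw [this]; linarith
  obtain ⟨r, hr, hball⟩ := Metric.eventually_nhds_iff.1
    (hhcont.eventually_lt_const hval)
  set δ : ℝ := min (r / 2) (L / 2) with hδdef
  have hδ0 : 0 < δ := lt_min (by linarith) (by linarith)
  have hδr : δ < r := lt_of_le_of_lt (min_le_left _ _) (by linarith)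
  have hδL : δ < L := lt_of_le_of_lt (min_le_right _ _) (by linarith)
  have hhδ : (A + δ) * γ / (L - δ) < pFDRbar F γ + ε := by
    apply hball
    rw [Real.dist_eq, sub_zero, abs_of_pos hδ0]; exact hδr
  have hev1 : ∀ᶠ n in atTop, piF (mix (pn n) (Hn n)) < A + δ :=
    key (A + δ) (by linarith)
  have hev2 : ∀ᶠ n in atTop, L - δ < mix (pn n) (Hn n) γ :=
    hFγ.eventually_const_lt (by linarith)
  filter_upwards [hev1, hev2] with n h1 h2
  have hstep : pFDRbar (mix (pn n) (Hn n)) γ ≤ (A + δ) * γ / (L - δ) := by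
    apply div_le_div₀ (mul_nonneg (by linarith) hγ0.le)
      (mul_le_mul_of_nonneg_right h1.le hγ0.le) (by linarith) h2.le
  linarith
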